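/- arXiv:1910.12994 — 3 statements merged into one kernel-verified Lean document; each statement's English description precedes it below -/
import Mathlib

section
/- In the setting of the previous statement, if additionally X₂ = conv(X), then Z_{C₂}(γ̄₂) = min{cᵀx : Ex ≥ p, x ∈ conv(X)}, and the resulting uplift payment U₂ = Z_QIP − Z_{C₂}(γ̄₂) is minimal over all choices of price vector γ, i.e., U₂ ≤ Z_QIP − min{cᵀx + γᵀ(p − Ex) : x ∈ conv(X)} for every γ ≥ 0. -/
private lemma swap_sum {a b : ℕ} (M : Matrix (Fin a) (Fin b) ℝ) (u : Fin a → ℝ)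
    (x : Fin b → ℝ) :
    ∑ i, M.transpose.mulVec u i * x i = ∑ j, u j * M.mulVec x j := by
  simp only [Matrix.mulVec, dotProduct, Matrix.transpose_apply,
    Finset.sum_mul, Finset.mul_sum]
  rw [Finset.sum_comm]
  exact Finset.sum_congr rfl fun i _ => Finset.sum_congr rfl fun j _ => by ring

/-- If additionally `X₂ = conv(X)`, then `Z_{C₂}(γ̄₂)` equals
`min{cᵀx : Ex ≥ p, x ∈ conv(X)}`, and the resulting uplift payment
`U₂ = Z_QIP − Z_{C₂}(γ̄₂)` is minimal over all prices `γ ≥ 0`. -/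
theorem stmt4 {n n₁ m pd : ℕ}
    (A A₂ : Matrix (Fin m) (Fin n) ℝ) (E : Matrix (Fin pd) (Fin n) ℝ)
    (b b₂ : Fin m → ℝ) (p : Fin pd → ℝ) (c : Fin n → ℝ)
    (γ₂ : Fin pd → ℝ) (ZQIP ZC₂ ZC₂γ : ℝ) (X : Set (Fin n → ℝ))
    (hX : X = {x | A.mulVec x ≤ b ∧ ∀ i : Fin n, (i : ℕ) < n₁ → x i = 0 ∨ x i = 1})
    -- `conv(X)` is polyhedral, described by `A₂ x ≤ b₂`
    (hconvpoly : {x : Fin n → ℝ | A₂.mulVec x ≤ b₂} = convexHull ℝ X)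
    -- Z_QIP
    (hZQIP : IsLeast {v : ℝ | ∃ x ∈ X, p ≤ E.mulVec x ∧ v = ∑ i, c i * x i} ZQIP)
    -- the LP over conv(X)
    (hZC₂ : IsLeast {v : ℝ | ∃ x ∈ convexHull ℝ X, p ≤ E.mulVec x ∧
      v = ∑ i, c i * x i} ZC₂)
    -- `γ̄₂` is an optimal dual vector for `Ex ≥ p` in the LP over conv(X)
    (hdual : 0 ≤ γ₂ ∧ ∃ η : Fin m → ℝ, 0 ≤ η ∧
      (∀ i : Fin n, E.transpose.mulVec γ₂ i - A₂.transpose.mulVec η i = c i) ∧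
      (∑ j, γ₂ j * p j) - (∑ k, η k * b₂ k) = ZC₂)
    -- the Lagrangian relaxation value `Z_{C₂}(γ̄₂)` over conv(X)
    (hZC₂γ : IsLeast {v : ℝ | ∃ x ∈ convexHull ℝ X,
      v = (∑ i, c i * x i) + ∑ j, γ₂ j * (p j - E.mulVec x j)} ZC₂γ) :
    ZC₂γ = ZC₂ ∧
      ∀ γ : Fin pd → ℝ, 0 ≤ γ → ∀ L : ℝ,
        IsLeast {v : ℝ | ∃ x ∈ convexHull ℝ X,
          v = (∑ i, c i * x i) + ∑ j, γ j * (p j - E.mulVec x j)} L →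
        ZQIP - ZC₂γ ≤ ZQIP - L := by
  obtain ⟨hγ₂, η, hη, hc, hdv⟩ := hdual
  -- any Lagrangian point with γ₂ has value ≥ ZC₂
  have key : ∀ x ∈ convexHull ℝ X,
      ZC₂ ≤ (∑ i, c i * x i) + ∑ j, γ₂ j * (p j - E.mulVec x j) := by
    intro x hx
    have hAx : A₂.mulVec x ≤ b₂ := by
      rw [← hconvpoly] at hx; exact hx
    have hexp : (∑ i, c i * x i) + ∑ j, γ₂ j * (p j - E.mulVec x j)
        = (∑ j, γ₂ j * p j) - ∑ k, η k * A₂.mulVec x k := by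
      have h1 : ∑ i, c i * x i
          = (∑ i, E.transpose.mulVec γ₂ i * x i)
            - ∑ i, A₂.transpose.mulVec η i * x i := by
        rw [← Finset.sum_sub_distrib]
        exact Finset.sum_congr rfl fun i _ => by rw [← hc i, sub_mul]
      rw [h1, swap_sum E γ₂ x, swap_sum A₂ η x]
      have h2 : ∑ j, γ₂ j * (p j - E.mulVec x j)
          = (∑ j, γ₂ j * p j) - ∑ j, γ₂ j * E.mulVec x j := by
        rw [← Finset.sum_sub_distrib]
        exact Finset.sum_congr rfl fun j _ => by rw [mul_sub]
      rw [h2]; ring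
    rw [hexp, ← hdv]
    have : ∑ k, η k * A₂.mulVec x k ≤ ∑ k, η k * b₂ k :=
      Finset.sum_le_sum fun k _ => mul_le_mul_of_nonneg_left (hAx k) (hη k)
    linarith
  -- feasible LP optimum x*
  obtain ⟨xs, hxs, hxfeas, hxval⟩ := hZC₂.1
  have hval : ∀ γ : Fin pd → ℝ, 0 ≤ γ →
      (∑ i, c i * xs i) + (∑ j, γ j * (p j - E.mulVec xs j)) ≤ ZC₂ := by
    intro γ hγ
    have : ∑ j, γ j * (p j - E.mulVec xs j) ≤ 0 := by
      apply Finset.sum_nonpos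
      intro j _
      exact mul_nonpos_of_nonneg_of_nonpos (hγ j) (by linarith [hxfeas j])
    linarith [hxval.ge]
  have hle : ZC₂γ ≤ ZC₂ :=
    le_trans (hZC₂γ.2 ⟨xs, hxs, rfl⟩) (hval γ₂ hγ₂)
  have hge : ZC₂ ≤ ZC₂γ := by
    obtain ⟨x, hx, hxv⟩ := hZC₂γ.1
    rw [hxv]; exact key x hx
  refine ⟨le_antisymm hle hge, ?_⟩
  intro γ hγ L hL
  have : L ≤ ZC₂ := le_trans (hL.2 ⟨xs, hxs, rfl⟩) (hval γ hγ)
  linarith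
end

section
/- If in an iterative algorithm each iteration replaces the current polyhedral relaxation Xₖ by a tighter one X_{k+1} ⊆ Xₖ with X_{k+1} ⊇ conv(X), and at each iteration the Lagrangian relaxation at the optimal dual price admits an optimal solution with binary integer-designated coordinates, then the sequence of uplift payments Uₖ = Z_QIP − Z_{Cₖ}(γ̄ₖ) is non-increasing and bounded below by the minimum uplift payment U* = Z_QIP − min{cᵀx : Ex ≥ p, x ∈ conv(X)}; hence (Uₖ) converges. -/
/-!
Enlarging the feasible region of a minimisation problem can only lower its optimum. Along the
nested relaxations `conv(X) ⊆ X_{k+1} ⊆ Xₖ` the values `Z_{Cₖ}` therefore increase and stay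
below the value over `conv(X)`, so the uplifts `Z_QIP − Z_{Cₖ}` decrease, are bounded below by
`U*`, and converge as bounded monotone real sequences do.
-/

section FeasibleValues

variable {α β : Type*} (P : α → Prop) (f : α → β)

def feasibleValues (S : Set α) : Set β := {v | ∃ x ∈ S, P x ∧ v = f x}

lemma feasibleValues_mono : Monotone (feasibleValues P f) :=
  fun _ _ hST _ ⟨x, hx, hPx, hv⟩ => ⟨x, hST hx, hPx, hv⟩

variable {P f} [Preorder β]

lemma IsLeast.le_of_feasibleValues_subset {S T : Set α} {a b : β}
    (ha : IsLeast (feasibleValues P f S) a) (hb : IsLeast (feasibleValues P f T) b)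
    (hST : S ⊆ T) : b ≤ a :=
  ha.mono hb (feasibleValues_mono P f hST)

lemma monotone_of_isLeast_feasibleValues {S : ℕ → Set α} {Z : ℕ → β}
    (hS : ∀ k, S (k + 1) ⊆ S k) (hZ : ∀ k, IsLeast (feasibleValues P f (S k)) (Z k)) :
    Monotone Z :=
  monotone_nat_of_le_succ fun k => (hZ (k + 1)).le_of_feasibleValues_subset (hZ k) (hS k)

end FeasibleValues

theorem stmt5_general {n pd : ℕ}
    (E : Matrix (Fin pd) (Fin n) ℝ) (p : Fin pd → ℝ) (c : Fin n → ℝ)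
    (X : Set (Fin n → ℝ)) (Xk : ℕ → Set (Fin n → ℝ))
    (ZQIP Zconv : ℝ) (ZC : ℕ → ℝ)
    (hnest : ∀ k, Xk (k + 1) ⊆ Xk k)
    (hconv : ∀ k, convexHull ℝ X ⊆ Xk k)
    -- tightened LP relaxations `Z_{Cₖ}`
    (hZC : ∀ k, IsLeast {v : ℝ | ∃ x ∈ Xk k, p ≤ E.mulVec x ∧
      v = ∑ i, c i * x i} (ZC k))
    -- the LP over conv(X)
    (hZconv : IsLeast {v : ℝ | ∃ x ∈ convexHull ℝ X, p ≤ E.mulVec x ∧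
      v = ∑ i, c i * x i} Zconv) :
    Antitone (fun k => ZQIP - ZC k) ∧
    (∀ k, ZQIP - Zconv ≤ ZQIP - ZC k) ∧
    ∃ l : ℝ, Filter.Tendsto (fun k => ZQIP - ZC k) Filter.atTop (nhds l) := by
  have hmono : Monotone ZC := monotone_of_isLeast_feasibleValues hnest hZC
  have hle : ∀ k, ZC k ≤ Zconv := fun k =>
    hZconv.le_of_feasibleValues_subset (hZC k) (hconv k)
  have hbdd : BddAbove (Set.range ZC) := ⟨Zconv, Set.forall_mem_range.2 hle⟩
  exact ⟨fun _ _ hab => sub_le_sub_left (hmono hab) ZQIP,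
    fun k => sub_le_sub_left (hle k) ZQIP,
    _, (tendsto_atTop_ciSup hmono hbdd).const_sub ZQIP⟩

/-- Along an iterative algorithm with tighter and tighter polyhedral
relaxations `conv(X) ⊆ X_{k+1} ⊆ Xₖ` (each Lagrangian relaxation having a
binary-optimal solution), the uplift payments `Uₖ = Z_QIP − Z_{Cₖ}(γ̄ₖ)` are
non-increasing and bounded below by the minimum uplift payment
`U* = Z_QIP − min{cᵀx : Ex ≥ p, x ∈ conv(X)}`; hence `(Uₖ)` converges. -/
theorem stmt5 {n n₁ pd : ℕ}
    (E : Matrix (Fin pd) (Fin n) ℝ) (p : Fin pd → ℝ) (c : Fin n → ℝ)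
    (X : Set (Fin n → ℝ)) (Xk : ℕ → Set (Fin n → ℝ)) (γ : ℕ → Fin pd → ℝ)
    (ZQIP Zconv : ℝ) (ZC : ℕ → ℝ)
    (hXbin : ∀ x ∈ X, ∀ i : Fin n, (i : ℕ) < n₁ → x i = 0 ∨ x i = 1)
    (hnest : ∀ k, Xk (k + 1) ⊆ Xk k)
    (hconv : ∀ k, convexHull ℝ X ⊆ Xk k)
    -- Z_QIP
    (hZQIP : IsLeast {v : ℝ | ∃ x ∈ X, p ≤ E.mulVec x ∧ v = ∑ i, c i * x i} ZQIP)
    -- tightened LP relaxations `Z_{Cₖ}`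
    (hZC : ∀ k, IsLeast {v : ℝ | ∃ x ∈ Xk k, p ≤ E.mulVec x ∧
      v = ∑ i, c i * x i} (ZC k))
    -- strong duality: `Z_{Cₖ}(γ̄ₖ) = Z_{Cₖ}` at the optimal dual vector `γ̄ₖ`
    (hLag : ∀ k, IsLeast {v : ℝ | ∃ x ∈ Xk k,
      v = (∑ i, c i * x i) + ∑ j, γ k j * (p j - E.mulVec x j)} (ZC k))
    -- at each iteration the Lagrangian relaxation has a binary-optimal solution
    (hbin : ∀ k, ∃ x ∈ Xk k, (∀ i : Fin n, (i : ℕ) < n₁ → x i = 0 ∨ x i = 1) ∧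
      (∑ i, c i * x i) + ∑ j, γ k j * (p j - E.mulVec x j) = ZC k)
    -- the LP over conv(X)
    (hZconv : IsLeast {v : ℝ | ∃ x ∈ convexHull ℝ X, p ≤ E.mulVec x ∧
      v = ∑ i, c i * x i} Zconv) :
    Antitone (fun k => ZQIP - ZC k) ∧
    (∀ k, ZQIP - Zconv ≤ ZQIP - ZC k) ∧
    ∃ l : ℝ, Filter.Tendsto (fun k => ZQIP - ZC k) Filter.atTop (nhds l) :=
  stmt5_general E p c X Xk ZQIP Zconv ZC hnest hconv hZC hZconv
end

section
/- In the EUC formulation, if (w*, y*, z*, θ*, q*, φ*) is a feasible solution with w*, y*, z* binary, then the mapped solution (x*, u*, v*, e*) defined by the aggregation formulas satisfies the generation bounds P̲_s u*_s ≤ x*_s ≤ P̄_s u*_s for all times s. -/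
open Finset

/-! Each interval containing `s` contributes `q pr s`, bounded by `P̲_s` and `P̄_s` times its
indicator (`w_k` or `y_{tk}`); summing these bounds over the intervals containing `s` gives the
claim, once one notes that a first on-interval `[1, k]` contains `s ≥ 1` exactly when `s ≤ k`. -/

theorem Finset.mul_sum_le_sum_and_sum_le_mul_sum {ι R : Type*} [NonUnitalNonAssocSemiring R]
    [PartialOrder R] [IsOrderedAddMonoid R] (t : Finset ι) (a b : R) (c f : ι → R)
    (h : ∀ i ∈ t, a * c i ≤ f i ∧ f i ≤ b * c i) :
    a * ∑ i ∈ t, c i ≤ ∑ i ∈ t, f i ∧ ∑ i ∈ t, f i ≤ b * ∑ i ∈ t, c i := by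
  rw [mul_sum, mul_sum]
  exact ⟨sum_le_sum fun i hi => (h i hi).1, sum_le_sum fun i hi => (h i hi).2⟩

theorem filter_snd_ge_eq_filter_mem_Icc_of_fst_eq_one {TK : Finset (ℕ × ℕ)}
    (hTK : ∀ pr ∈ TK, pr.1 = 1) {s : ℕ} (hs : 1 ≤ s) :
    TK.filter (fun pr => s ≤ pr.2) = TK.filter (fun pr => pr.1 ≤ s ∧ s ≤ pr.2) :=
  filter_congr fun pr hpr => by simp [hTK pr hpr, hs]

theorem stmt11_general (T : ℕ) (TK1 TK2 : Finset (ℕ × ℕ)) (Pl Pu : ℕ → ℝ)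
    (w : ℕ → ℝ) (y : ℕ × ℕ → ℝ) (q : ℕ × ℕ → ℕ → ℝ)
    -- first on-intervals start at time 1
    (hTK1 : ∀ pr ∈ TK1, pr.1 = 1)
    -- per-interval generation bounds of the EUC formulation
    (hb1 : ∀ pr ∈ TK1, ∀ s, pr.1 ≤ s → s ≤ pr.2 →
      Pl s * w pr.2 ≤ q pr s ∧ q pr s ≤ Pu s * w pr.2)
    (hb2 : ∀ pr ∈ TK2, ∀ s, pr.1 ≤ s → s ≤ pr.2 →
      Pl s * y pr ≤ q pr s ∧ q pr s ≤ Pu s * y pr) :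
    ∀ s, 1 ≤ s → s ≤ T →
      Pl s * ((∑ pr ∈ TK1.filter (fun pr => s ≤ pr.2), w pr.2)
          + ∑ pr ∈ TK2.filter (fun pr => pr.1 ≤ s ∧ s ≤ pr.2), y pr)
        ≤ (∑ pr ∈ TK1.filter (fun pr => pr.1 ≤ s ∧ s ≤ pr.2), q pr s)
          + (∑ pr ∈ TK2.filter (fun pr => pr.1 ≤ s ∧ s ≤ pr.2), q pr s) ∧
      (∑ pr ∈ TK1.filter (fun pr => pr.1 ≤ s ∧ s ≤ pr.2), q pr s)
          + (∑ pr ∈ TK2.filter (fun pr => pr.1 ≤ s ∧ s ≤ pr.2), q pr s)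
        ≤ Pu s * ((∑ pr ∈ TK1.filter (fun pr => s ≤ pr.2), w pr.2)
          + ∑ pr ∈ TK2.filter (fun pr => pr.1 ≤ s ∧ s ≤ pr.2), y pr) := by
  intro s hs _
  rw [filter_snd_ge_eq_filter_mem_Icc_of_fst_eq_one hTK1 hs, mul_add, mul_add]
  obtain ⟨hlow1, hupp1⟩ := mul_sum_le_sum_and_sum_le_mul_sum
    (TK1.filter fun pr => pr.1 ≤ s ∧ s ≤ pr.2) (Pl s) (Pu s) (fun pr => w pr.2)
    (fun pr => q pr s) fun pr hpr => by
      obtain ⟨hmem, hle⟩ := mem_filter.1 hpr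
      exact hb1 pr hmem s hle.1 hle.2
  obtain ⟨hlow2, hupp2⟩ := mul_sum_le_sum_and_sum_le_mul_sum
    (TK2.filter fun pr => pr.1 ≤ s ∧ s ≤ pr.2) (Pl s) (Pu s) y
    (fun pr => q pr s) fun pr hpr => by
      obtain ⟨hmem, hle⟩ := mem_filter.1 hpr
      exact hb2 pr hmem s hle.1 hle.2
  exact ⟨add_le_add hlow1 hlow2, add_le_add hupp1 hupp2⟩

/-- In the EUC formulation, if `(w*, y*, z*, θ*, q*, φ*)` is feasible
with `w*, y*, z*` binary, then the aggregated solution satisfies the generation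
bounds `P̲_s u*_s ≤ x*_s ≤ P̄_s u*_s` for all times `s`. -/
theorem stmt11 (T : ℕ) (TK1 TK2 : Finset (ℕ × ℕ)) (Pl Pu : ℕ → ℝ)
    (w θ : ℕ → ℝ) (y z : ℕ × ℕ → ℝ) (q : ℕ × ℕ → ℕ → ℝ)
    -- first on-intervals start at time 1
    (hTK1 : ∀ pr ∈ TK1, pr.1 = 1)
    -- `w*, y*, z*` binary
    (hwbin : ∀ k, w k = 0 ∨ w k = 1)
    (hybin : ∀ pr, y pr = 0 ∨ y pr = 1)
    (hzbin : ∀ pr, z pr = 0 ∨ z pr = 1)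
    -- per-interval generation bounds of the EUC formulation
    (hb1 : ∀ pr ∈ TK1, ∀ s, pr.1 ≤ s → s ≤ pr.2 →
      Pl s * w pr.2 ≤ q pr s ∧ q pr s ≤ Pu s * w pr.2)
    (hb2 : ∀ pr ∈ TK2, ∀ s, pr.1 ≤ s → s ≤ pr.2 →
      Pl s * y pr ≤ q pr s ∧ q pr s ≤ Pu s * y pr) :
    ∀ s, 1 ≤ s → s ≤ T →
      Pl s * ((∑ pr ∈ TK1.filter (fun pr => s ≤ pr.2), w pr.2)
          + ∑ pr ∈ TK2.filter (fun pr => pr.1 ≤ s ∧ s ≤ pr.2), y pr)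
        ≤ (∑ pr ∈ TK1.filter (fun pr => pr.1 ≤ s ∧ s ≤ pr.2), q pr s)
          + (∑ pr ∈ TK2.filter (fun pr => pr.1 ≤ s ∧ s ≤ pr.2), q pr s) ∧
      (∑ pr ∈ TK1.filter (fun pr => pr.1 ≤ s ∧ s ≤ pr.2), q pr s)
          + (∑ pr ∈ TK2.filter (fun pr => pr.1 ≤ s ∧ s ≤ pr.2), q pr s)
        ≤ Pu s * ((∑ pr ∈ TK1.filter (fun pr => s ≤ pr.2), w pr.2)
          + ∑ pr ∈ TK2.filter (fun pr => pr.1 ≤ s ∧ s ≤ pr.2), y pr) :=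
  stmt11_general T TK1 TK2 Pl Pu w y q hTK1 hb1 hb2
end
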